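/- arXiv:2311.13214 — 4 statements merged into one kernel-verified Lean document; each statement's English description precedes it below -/
import Mathlib

section
/- Negative feedback interconnection of a passive system through a positive semidefinite coupling preserves the dissipation inequality: if (A_b,B_b,C_b,D_b) is passive with storage matrix Ξ, S ⪰ 0, I + D_bS is invertible, and the interconnected system matrices are A_c = A_b − B_b(I+SD_b)⁻¹SC_b, B_c = B_b(I+SD_b)⁻¹ℬ, C_c = ℬᵀ(I+D_bS)⁻¹C_b, D_c = ℬᵀD_b(I+SD_b)⁻¹ℬ, then for all x and u_c: 2xᵀΞ(A_cx + B_cu_c) ≤ 2(C_cx + D_cu_c)ᵀu_c. -/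
open Matrix

def NegSemidef {m : Type*} [Fintype m] (M : Matrix m m ℝ) : Prop :=
  ∀ z : m → ℝ, z ⬝ᵥ (M *ᵥ z) ≤ 0

/-! With `v_b := (I + S D_b)⁻¹ (ℬ u_c - S C_b x)` the closed loop is the open-loop system driven
by `v_b`: its state derivative is `A_b x + B_b v_b`, its output `z_b := C_b x + D_b v_b` satisfies
the loop equation `v_b = ℬ u_c - S z_b`, and the push-through identity
`(I + D_b S)⁻¹ = I - D_b (I + S D_b)⁻¹ S` turns `C_c x + D_c u_c` into `ℬᵀ z_b`. Passivity then gives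
`xᵀ Ξ (A_b x + B_b v_b) ≤ v_bᵀ z_b = (ℬ u_c)ᵀ z_b - z_bᵀ S z_b ≤ (ℬᵀ z_b)ᵀ u_c`. -/

theorem NegSemidef.dissipation_le {m p : Type*} [Fintype m] [Fintype p]
    {A Ξ : Matrix m m ℝ} {B : Matrix m p ℝ} {C : Matrix p m ℝ} {D : Matrix p p ℝ}
    (hΞ : Ξ.IsSymm)
    (h : NegSemidef (fromBlocks (Aᵀ * Ξ + Ξ * A) (Ξ * B - Cᵀ) (Bᵀ * Ξ - C) (-(D + Dᵀ))))
    (x : m → ℝ) (v : p → ℝ) :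
    x ⬝ᵥ (Ξ *ᵥ (A *ᵥ x + B *ᵥ v)) ≤ v ⬝ᵥ (C *ᵥ x + D *ᵥ v) := by
  have hΞx (w : m → ℝ) : Ξ *ᵥ x ⬝ᵥ w = x ⬝ᵥ Ξ *ᵥ w := by
    rw [← vecMul_transpose, hΞ.eq, ← dotProduct_mulVec]
  have hform := h (Sum.elim x v)
  rw [fromBlocks_mulVec, sumElim_dotProduct_sumElim] at hform
  simp only [Sum.elim_comp_inl, Sum.elim_comp_inr, add_mulVec, sub_mulVec, neg_mulVec,
    ← mulVec_mulVec, dotProduct_add, dotProduct_sub, dotProduct_neg, mulVec_add,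
    dotProduct_transpose_mulVec, hΞx] at hform ⊢
  linarith

theorem inv_one_add_mul_eq_one_sub {p r R : Type*} [Fintype p] [DecidableEq p] [Fintype r]
    [DecidableEq r] [CommRing R] (D : Matrix p r R) (S : Matrix r p R) (h : IsUnit (1 + S * D)) :
    (1 + D * S)⁻¹ = 1 - D * (1 + S * D)⁻¹ * S := by
  have hK : (1 + S * D) * (1 + S * D)⁻¹ = 1 := mul_nonsing_inv _ ((isUnit_iff_isUnit_det _).mp h)
  refine inv_eq_right_inv ?_
  calc (1 + D * S) * (1 - D * (1 + S * D)⁻¹ * S)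
      = 1 + D * S - D * ((1 + S * D) * (1 + S * D)⁻¹) * S := by
        simp only [Matrix.mul_sub, Matrix.add_mul, Matrix.mul_add, Matrix.one_mul,
          Matrix.mul_one, Matrix.mul_assoc]
    _ = 1 := by rw [hK, Matrix.mul_one, add_sub_cancel_right]

theorem eq_sub_mulVec_of_one_add_mul_mulVec_eq {p r R : Type*} [Fintype p] [Fintype r]
    [DecidableEq r] [CommRing R] {S : Matrix r p R} {D : Matrix p r R} {v w : r → R}
    {y : p → R} (hv : (1 + S * D) *ᵥ v = w - S *ᵥ y) : v = w - S *ᵥ (y + D *ᵥ v) := by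
  rw [add_mulVec, one_mulVec, ← mulVec_mulVec] at hv
  rw [mulVec_add, ← sub_sub, ← hv, add_sub_cancel_right]

theorem Matrix.PosSemidef.sub_mulVec_dotProduct_le {p : Type*} [Fintype p] {S : Matrix p p ℝ}
    (hS : S.PosSemidef) (w z : p → ℝ) : (w - S *ᵥ z) ⬝ᵥ z ≤ w ⬝ᵥ z := by
  have hSz : 0 ≤ z ⬝ᵥ S *ᵥ z := by simpa using hS.dotProduct_mulVec_nonneg z
  rw [sub_dotProduct, dotProduct_comm (S *ᵥ z)]
  linarith

theorem stmt3_general {n pb pc : ℕ}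
    (Ab : Matrix (Fin n) (Fin n) ℝ) (Bb : Matrix (Fin n) (Fin pb) ℝ)
    (Cb : Matrix (Fin pb) (Fin n) ℝ) (Db : Matrix (Fin pb) (Fin pb) ℝ)
    (Ξ : Matrix (Fin n) (Fin n) ℝ) (hΞ : Ξ.PosDef)
    (hLMI : NegSemidef
      (fromBlocks (Abᵀ * Ξ + Ξ * Ab) (Ξ * Bb - Cbᵀ) (Bbᵀ * Ξ - Cb) (-(Db + Dbᵀ))))
    (S : Matrix (Fin pb) (Fin pb) ℝ) (hS : S.PosSemidef)
    (hSD : IsUnit (1 + S * Db))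
    (𝓑 : Matrix (Fin pb) (Fin pc) ℝ)
    (Ac : Matrix (Fin n) (Fin n) ℝ) (Bc : Matrix (Fin n) (Fin pc) ℝ)
    (Cc : Matrix (Fin pc) (Fin n) ℝ) (Dc : Matrix (Fin pc) (Fin pc) ℝ)
    (hAc : Ac = Ab - Bb * (1 + S * Db)⁻¹ * S * Cb)
    (hBc : Bc = Bb * (1 + S * Db)⁻¹ * 𝓑)
    (hCc : Cc = 𝓑ᵀ * (1 + Db * S)⁻¹ * Cb)
    (hDc : Dc = 𝓑ᵀ * Db * (1 + S * Db)⁻¹ * 𝓑) :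
    ∀ (x : Fin n → ℝ) (uc : Fin pc → ℝ),
      2 * (x ⬝ᵥ (Ξ *ᵥ (Ac *ᵥ x + Bc *ᵥ uc))) ≤ 2 * ((Cc *ᵥ x + Dc *ᵥ uc) ⬝ᵥ uc) := by
  intro x uc
  set vb := (1 + S * Db)⁻¹ *ᵥ (𝓑 *ᵥ uc - S *ᵥ (Cb *ᵥ x)) with hvb
  set zb := Cb *ᵥ x + Db *ᵥ vb with hzb
  have hloop : vb = 𝓑 *ᵥ uc - S *ᵥ zb := by
    refine eq_sub_mulVec_of_one_add_mul_mulVec_eq ?_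
    rw [hvb, mulVec_mulVec, mul_nonsing_inv _ ((isUnit_iff_isUnit_det _).mp hSD), one_mulVec]
  have hstate : Ac *ᵥ x + Bc *ᵥ uc = Ab *ᵥ x + Bb *ᵥ vb := by
    simp only [hAc, hBc, hvb, sub_mulVec, ← mulVec_mulVec, mulVec_sub]
    abel
  have houtput : Cc *ᵥ x + Dc *ᵥ uc = 𝓑ᵀ *ᵥ zb := by
    simp only [hCc, hDc, inv_one_add_mul_eq_one_sub Db S hSD, hzb, hvb, sub_mulVec, one_mulVec,
      ← mulVec_mulVec, mulVec_sub, mulVec_add]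
    abel
  have hpassive := hLMI.dissipation_le (isHermitian_iff_isSymm.mp hΞ.isHermitian) x vb
  have hcoupling : vb ⬝ᵥ zb ≤ (𝓑ᵀ *ᵥ zb) ⬝ᵥ uc := by
    rw [hloop, dotProduct_comm _ uc, dotProduct_transpose_mulVec, dotProduct_comm zb]
    exact hS.sub_mulVec_dotProduct_le _ _
  rw [hstate, houtput]
  linarith

/-- negative feedback interconnection of a passive system through a
positive semidefinite coupling preserves the dissipation inequality. -/
theorem stmt3 {n pb pc : ℕ}
    (Ab : Matrix (Fin n) (Fin n) ℝ) (Bb : Matrix (Fin n) (Fin pb) ℝ)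
    (Cb : Matrix (Fin pb) (Fin n) ℝ) (Db : Matrix (Fin pb) (Fin pb) ℝ)
    (Ξ : Matrix (Fin n) (Fin n) ℝ) (hΞ : Ξ.PosDef)
    (hLMI : NegSemidef
      (fromBlocks (Abᵀ * Ξ + Ξ * Ab) (Ξ * Bb - Cbᵀ) (Bbᵀ * Ξ - Cb) (-(Db + Dbᵀ))))
    (S : Matrix (Fin pb) (Fin pb) ℝ) (hS : S.PosSemidef)
    (hDS : IsUnit (1 + Db * S)) (hSD : IsUnit (1 + S * Db))
    (𝓑 : Matrix (Fin pb) (Fin pc) ℝ)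
    (Ac : Matrix (Fin n) (Fin n) ℝ) (Bc : Matrix (Fin n) (Fin pc) ℝ)
    (Cc : Matrix (Fin pc) (Fin n) ℝ) (Dc : Matrix (Fin pc) (Fin pc) ℝ)
    (hAc : Ac = Ab - Bb * (1 + S * Db)⁻¹ * S * Cb)
    (hBc : Bc = Bb * (1 + S * Db)⁻¹ * 𝓑)
    (hCc : Cc = 𝓑ᵀ * (1 + Db * S)⁻¹ * Cb)
    (hDc : Dc = 𝓑ᵀ * Db * (1 + S * Db)⁻¹ * 𝓑) :
    ∀ (x : Fin n → ℝ) (uc : Fin pc → ℝ),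
      2 * (x ⬝ᵥ (Ξ *ᵥ (Ac *ᵥ x + Bc *ᵥ uc))) ≤ 2 * ((Cc *ᵥ x + Dc *ᵥ uc) ⬝ᵥ uc) :=
  stmt3_general Ab Bb Cb Db Ξ hΞ hLMI S hS hSD 𝓑 Ac Bc Cc Dc hAc hBc hCc hDc
end

section
/- The same storage matrix certifies passivity of the feedback interconnection: under the assumptions of the interconnection construction, the matrix [[A_cᵀΞ+ΞA_c, ΞB_c−C_cᵀ],[B_cᵀΞ−C_c, −(D_c+D_cᵀ)]] is negative semidefinite, where (A_c,B_c,C_c,D_c) are the closed-loop matrices defined by A_c = A_b − B_b(I+SD_b)⁻¹SC_b, B_c = B_b(I+SD_b)⁻¹ℬ, C_c = ℬᵀ(I+D_bS)⁻¹C_b, D_c = ℬᵀD_b(I+SD_b)⁻¹ℬ. -/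
/-!
Under the feedback `u = 𝓑 w - S y` the closed loop driven by `w` is the plant driven by `u`,
observed through `𝓑ᵀ y`. Its supply `wᵀ 𝓑ᵀ y = uᵀ y + yᵀ S y` dominates the plant's supply `uᵀ y`
because `S ⪰ 0`, so the plant's dissipation inequality for the storage `xᵀ Ξ x` passes to the
closed loop.
-/

open Matrix

section PushThrough

variable {m n R : Type*} [Fintype m] [DecidableEq m] [Fintype n] [DecidableEq n] [CommRing R]

theorem Matrix.inv_one_add_mul_eq_sub {D : Matrix m n R} {S : Matrix n m R}
    (h : IsUnit (1 + S * D)) : (1 + D * S)⁻¹ = 1 - D * (1 + S * D)⁻¹ * S := by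
  have hP : (1 + S * D) * (1 + S * D)⁻¹ = 1 := mul_nonsing_inv _ ((isUnit_iff_isUnit_det _).mp h)
  apply inv_eq_right_inv
  calc (1 + D * S) * (1 - D * (1 + S * D)⁻¹ * S)
      = 1 + D * S - (D * (1 + S * D)⁻¹ * S + D * S * (D * (1 + S * D)⁻¹ * S)) := by
        simp only [Matrix.add_mul, Matrix.mul_sub, Matrix.one_mul, Matrix.mul_one]
    _ = 1 + D * S - D * ((1 + S * D) * (1 + S * D)⁻¹) * S := by
        simp only [Matrix.add_mul, Matrix.mul_add, Matrix.one_mul, Matrix.mul_assoc]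
    _ = 1 := by rw [hP, Matrix.mul_one, add_sub_cancel_right]

end PushThrough

section Dissipation

variable {m p : Type*} [Fintype m] [Fintype p]

theorem dotProduct_fromBlocks_lmi_mulVec (Ξ A : Matrix m m ℝ) (B : Matrix m p ℝ)
    (C : Matrix p m ℝ) (D : Matrix p p ℝ) (x : m → ℝ) (u : p → ℝ) :
    (x ⊕ᵥ u) ⬝ᵥ (fromBlocks (Aᵀ * Ξ + Ξ * A) (Ξ * B - Cᵀ) (Bᵀ * Ξ - C) (-(D + Dᵀ)) *ᵥ (x ⊕ᵥ u))
      = (A *ᵥ x + B *ᵥ u) ⬝ᵥ (Ξ *ᵥ x) + x ⬝ᵥ (Ξ *ᵥ (A *ᵥ x + B *ᵥ u))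
        - 2 * u ⬝ᵥ (C *ᵥ x + D *ᵥ u) := by
  rw [fromBlocks_mulVec, sumElim_dotProduct_sumElim]
  simp only [Sum.elim_comp_inl, Sum.elim_comp_inr, add_mulVec, sub_mulVec, neg_mulVec,
    ← mulVec_mulVec, dotProduct_add, dotProduct_sub, dotProduct_neg, add_dotProduct, mulVec_add,
    dotProduct_mulVec _ Aᵀ, dotProduct_mulVec _ Bᵀ, dotProduct_mulVec _ Cᵀ,
    dotProduct_mulVec _ Dᵀ, vecMul_transpose, dotProduct_comm (C *ᵥ x) u,
    dotProduct_comm (D *ᵥ u) u]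
  ring

/-- The positive real LMI as a dissipation inequality: along `ẋ = A x + B u`, `y = C x + D u`,
the storage `xᵀ Ξ x` grows no faster than the supplied power `2 uᵀ y`. -/
theorem negSemidef_fromBlocks_lmi_iff (Ξ A : Matrix m m ℝ) (B : Matrix m p ℝ)
    (C : Matrix p m ℝ) (D : Matrix p p ℝ) :
    NegSemidef (fromBlocks (Aᵀ * Ξ + Ξ * A) (Ξ * B - Cᵀ) (Bᵀ * Ξ - C) (-(D + Dᵀ))) ↔
      ∀ x u, (A *ᵥ x + B *ᵥ u) ⬝ᵥ (Ξ *ᵥ x) + x ⬝ᵥ (Ξ *ᵥ (A *ᵥ x + B *ᵥ u))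
        ≤ 2 * u ⬝ᵥ (C *ᵥ x + D *ᵥ u) := by
  constructor
  · intro h x u
    have := h (x ⊕ᵥ u)
    rw [dotProduct_fromBlocks_lmi_mulVec] at this
    linarith
  · intro h z
    rw [← Sum.elim_comp_inl_inr z, dotProduct_fromBlocks_lmi_mulVec]
    linarith [h (z ∘ Sum.inl) (z ∘ Sum.inr)]

end Dissipation

section Feedback

variable {m p q R : Type*} [Fintype m] [Fintype p] [DecidableEq p] [Fintype q] [CommRing R]
  (A : Matrix m m R) (B : Matrix m p R) (C : Matrix p m R) (D : Matrix p p R)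
  (S : Matrix p p R) (𝓑 : Matrix p q R) (x : m → R) (w : q → R)

/-- The input `u` of the plant under the static feedback `u = 𝓑 w - S y`, `y = C x + D u`. -/
noncomputable def feedbackInput : p → R :=
  (1 + S * D)⁻¹ *ᵥ (𝓑 *ᵥ w - S *ᵥ (C *ᵥ x))

theorem feedbackInput_spec (h : IsUnit (1 + S * D)) :
    𝓑 *ᵥ w = feedbackInput C D S 𝓑 x w + S *ᵥ (C *ᵥ x + D *ᵥ feedbackInput C D S 𝓑 x w) := by
  have hP : (1 + S * D) * (1 + S * D)⁻¹ = 1 := mul_nonsing_inv _ ((isUnit_iff_isUnit_det _).mp h)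
  have hu : (1 + S * D) *ᵥ feedbackInput C D S 𝓑 x w = 𝓑 *ᵥ w - S *ᵥ (C *ᵥ x) := by
    rw [feedbackInput, mulVec_mulVec, hP, one_mulVec]
  rw [add_mulVec, one_mulVec, ← mulVec_mulVec] at hu
  rw [mulVec_add]
  linear_combination -hu

theorem closedLoop_state_eq :
    (A - B * (1 + S * D)⁻¹ * S * C) *ᵥ x + (B * (1 + S * D)⁻¹ * 𝓑) *ᵥ w
      = A *ᵥ x + B *ᵥ feedbackInput C D S 𝓑 x w := by
  simp only [feedbackInput, sub_mulVec, mulVec_sub, ← mulVec_mulVec]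
  abel

theorem closedLoop_output_eq (h : IsUnit (1 + S * D)) :
    (𝓑ᵀ * (1 + D * S)⁻¹ * C) *ᵥ x + (𝓑ᵀ * D * (1 + S * D)⁻¹ * 𝓑) *ᵥ w
      = 𝓑ᵀ *ᵥ (C *ᵥ x + D *ᵥ feedbackInput C D S 𝓑 x w) := by
  simp only [inv_one_add_mul_eq_sub h, feedbackInput, sub_mulVec, mulVec_sub, mulVec_add,
    one_mulVec, ← mulVec_mulVec]
  abel

end Feedback

theorem stmt4_general {n pb pc : ℕ}
    (Ab : Matrix (Fin n) (Fin n) ℝ) (Bb : Matrix (Fin n) (Fin pb) ℝ)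
    (Cb : Matrix (Fin pb) (Fin n) ℝ) (Db : Matrix (Fin pb) (Fin pb) ℝ)
    (Ξ : Matrix (Fin n) (Fin n) ℝ)
    (hLMI : NegSemidef
      (fromBlocks (Abᵀ * Ξ + Ξ * Ab) (Ξ * Bb - Cbᵀ) (Bbᵀ * Ξ - Cb) (-(Db + Dbᵀ))))
    (S : Matrix (Fin pb) (Fin pb) ℝ) (hS : S.PosSemidef)
    (hSD : IsUnit (1 + S * Db))
    (𝓑 : Matrix (Fin pb) (Fin pc) ℝ)
    (Ac : Matrix (Fin n) (Fin n) ℝ) (Bc : Matrix (Fin n) (Fin pc) ℝ)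
    (Cc : Matrix (Fin pc) (Fin n) ℝ) (Dc : Matrix (Fin pc) (Fin pc) ℝ)
    (hAc : Ac = Ab - Bb * (1 + S * Db)⁻¹ * S * Cb)
    (hBc : Bc = Bb * (1 + S * Db)⁻¹ * 𝓑)
    (hCc : Cc = 𝓑ᵀ * (1 + Db * S)⁻¹ * Cb)
    (hDc : Dc = 𝓑ᵀ * Db * (1 + S * Db)⁻¹ * 𝓑) :
    NegSemidef
      (fromBlocks (Acᵀ * Ξ + Ξ * Ac) (Ξ * Bc - Ccᵀ) (Bcᵀ * Ξ - Cc) (-(Dc + Dcᵀ))) := by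
  subst hAc hBc hCc hDc
  rw [negSemidef_fromBlocks_lmi_iff] at hLMI ⊢
  intro x w
  set u := feedbackInput Cb Db S 𝓑 x w
  set y := Cb *ᵥ x + Db *ᵥ u
  have hSy : 0 ≤ y ⬝ᵥ (S *ᵥ y) := hS.dotProduct_mulVec_nonneg y
  have hfeedback : 𝓑 *ᵥ w = u + S *ᵥ y := feedbackInput_spec Cb Db S 𝓑 x w hSD
  have hsupply : w ⬝ᵥ (𝓑ᵀ *ᵥ y) = u ⬝ᵥ y + y ⬝ᵥ (S *ᵥ y) := by
    rw [dotProduct_mulVec, vecMul_transpose, hfeedback, add_dotProduct, dotProduct_comm (S *ᵥ y)]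
  rw [closedLoop_state_eq, closedLoop_output_eq (h := hSD), hsupply]
  calc _ ≤ 2 * u ⬝ᵥ y := hLMI x u
    _ ≤ 2 * (u ⬝ᵥ y + y ⬝ᵥ (S *ᵥ y)) := by linarith

/-- the same storage matrix `Ξ` certifies the positive real LMI of
the closed-loop (feedback interconnected) system. -/
theorem stmt4 {n pb pc : ℕ}
    (Ab : Matrix (Fin n) (Fin n) ℝ) (Bb : Matrix (Fin n) (Fin pb) ℝ)
    (Cb : Matrix (Fin pb) (Fin n) ℝ) (Db : Matrix (Fin pb) (Fin pb) ℝ)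
    (Ξ : Matrix (Fin n) (Fin n) ℝ) (hΞ : Ξ.PosDef)
    (hLMI : NegSemidef
      (fromBlocks (Abᵀ * Ξ + Ξ * Ab) (Ξ * Bb - Cbᵀ) (Bbᵀ * Ξ - Cb) (-(Db + Dbᵀ))))
    (S : Matrix (Fin pb) (Fin pb) ℝ) (hS : S.PosSemidef)
    (hDS : IsUnit (1 + Db * S)) (hSD : IsUnit (1 + S * Db))
    (𝓑 : Matrix (Fin pb) (Fin pc) ℝ)
    (Ac : Matrix (Fin n) (Fin n) ℝ) (Bc : Matrix (Fin n) (Fin pc) ℝ)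
    (Cc : Matrix (Fin pc) (Fin n) ℝ) (Dc : Matrix (Fin pc) (Fin pc) ℝ)
    (hAc : Ac = Ab - Bb * (1 + S * Db)⁻¹ * S * Cb)
    (hBc : Bc = Bb * (1 + S * Db)⁻¹ * 𝓑)
    (hCc : Cc = 𝓑ᵀ * (1 + Db * S)⁻¹ * Cb)
    (hDc : Dc = 𝓑ᵀ * Db * (1 + S * Db)⁻¹ * 𝓑) :
    NegSemidef
      (fromBlocks (Acᵀ * Ξ + Ξ * Ac) (Ξ * Bc - Ccᵀ) (Bcᵀ * Ξ - Cc) (-(Dc + Dcᵀ))) :=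
  stmt4_general Ab Bb Cb Db Ξ hLMI S hS hSD 𝓑 Ac Bc Cc Dc hAc hBc hCc hDc
end

section
/- Truncation preserves the positive real LMI when the storage matrix is block-diagonal: suppose Ξ = diag(Γ₁, Γ₂) with Γ₁, Γ₂ symmetric positive definite, and Ξ satisfies the positive real LMI for the partitioned system A = [[A₁₁,A₁₂],[A₂₁,A₂₂]], B = [[B₁],[B₂]], C = [C₁ C₂], D. Then Γ₁ satisfies the positive real LMI for the truncated system (A₁₁, B₁, C₁, D); hence the truncated system is passive. -/
open Matrix

/-- truncation preserves the positive real LMI when the storage matrix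
is block-diagonal `Ξ = diag(Γ₁, Γ₂)`: the leading block `Γ₁` certifies the positive
real LMI for the truncated system `(A₁₁, B₁, C₁, D)`; hence (with `Γ₁ ≻ 0`) the
truncated system is passive. -/
theorem stmt9 {r m p : ℕ}
    (A11 : Matrix (Fin r) (Fin r) ℝ) (A12 : Matrix (Fin r) (Fin m) ℝ)
    (A21 : Matrix (Fin m) (Fin r) ℝ) (A22 : Matrix (Fin m) (Fin m) ℝ)
    (B1 : Matrix (Fin r) (Fin p) ℝ) (B2 : Matrix (Fin m) (Fin p) ℝ)
    (C1 : Matrix (Fin p) (Fin r) ℝ) (C2 : Matrix (Fin p) (Fin m) ℝ)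
    (D : Matrix (Fin p) (Fin p) ℝ)
    (Γ₁ : Matrix (Fin r) (Fin r) ℝ) (Γ₂ : Matrix (Fin m) (Fin m) ℝ)
    (hΓ₁ : Γ₁.PosDef) (hΓ₂ : Γ₂.PosDef)
    (hLMI :
      let A : Matrix (Fin r ⊕ Fin m) (Fin r ⊕ Fin m) ℝ := fromBlocks A11 A12 A21 A22
      let Ξ : Matrix (Fin r ⊕ Fin m) (Fin r ⊕ Fin m) ℝ := fromBlocks Γ₁ 0 0 Γ₂
      let B : Matrix (Fin r ⊕ Fin m) (Fin p) ℝ :=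
        Matrix.of fun i j => Sum.elim (fun a => B1 a j) (fun a => B2 a j) i
      let C : Matrix (Fin p) (Fin r ⊕ Fin m) ℝ :=
        Matrix.of fun q i => Sum.elim (C1 q) (C2 q) i
      NegSemidef
        (fromBlocks (Aᵀ * Ξ + Ξ * A) (Ξ * B - Cᵀ) (Bᵀ * Ξ - C) (-(D + Dᵀ)))) :
    Γ₁.PosDef ∧ NegSemidef
      (fromBlocks (A11ᵀ * Γ₁ + Γ₁ * A11) (Γ₁ * B1 - C1ᵀ) (B1ᵀ * Γ₁ - C1)
        (-(D + Dᵀ))) := by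
  refine ⟨hΓ₁, ?_⟩
  intro z
  have h := hLMI (Sum.elim (Sum.elim (fun i => z (Sum.inl i)) 0) (fun j => z (Sum.inr j)))
  simp only [NegSemidef, fromBlocks, dotProduct, mulVec, Matrix.add_apply, Matrix.sub_apply,
    Matrix.mul_apply, Matrix.neg_apply, Matrix.transpose_apply, Matrix.of_apply,
    Sum.elim_inl, Sum.elim_inr, Fintype.sum_sum_type, Pi.zero_apply, mul_zero, zero_mul,
    Matrix.zero_apply, add_zero, zero_add, Finset.sum_const_zero] at h ⊢
  convert h using 2
end

section
/- For the balancing transformation: given symmetric positive definite matrices X_i = R_iᵀR_i and X_o = R_oᵀR_o (Cholesky factorizations) and a singular value decomposition R_oR_iᵀ = UΓVᵀ with Γ diagonal positive definite and U, V orthogonal, the matrix T = Γ^{−1/2}UᵀR_o is invertible with T⁻¹ = R_iᵀVΓ^{−1/2}, and it satisfies T X_i Tᵀ = Γ and T⁻ᵀ X_o T⁻¹ = Γ. -/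
/-!
The singular value decomposition gives `Uᵀ (R_o R_iᵀ) V = Γ`, so with `S = Γ^{-1/2}` both
`T R_iᵀ = S Γ Vᵀ` and `R_o T⁻¹ = U Γ S`. Hence `T T⁻¹ = S Γ S = 1`, and since `X_i`, `X_o` are
Gram matrices, `T X_i Tᵀ = (T R_iᵀ)(T R_iᵀ)ᵀ` and `T⁻ᵀ X_o T⁻¹ = (R_o T⁻¹)ᵀ(R_o T⁻¹)` both reduce,
by orthogonality of `V` and `U`, to `S Γ² S = Γ`.
-/

open Matrix

namespace Matrix

variable {R : Type*} [CommRing R] {m n : Type*}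

theorem mul_mul_transpose_of_transpose_mul_self_eq_one [Fintype n] [DecidableEq n]
    {V : Matrix n n R} (hV : Vᵀ * V = 1) (A : Matrix m n R) : A * Vᵀ * (A * Vᵀ)ᵀ = A * Aᵀ := by
  rw [transpose_mul, transpose_transpose, Matrix.mul_assoc, ← Matrix.mul_assoc Vᵀ, hV,
    Matrix.one_mul]

theorem transpose_mul_mul_of_transpose_mul_self_eq_one [Fintype m] [DecidableEq m]
    {U : Matrix m m R} (hU : Uᵀ * U = 1) (A : Matrix m n R) : (U * A)ᵀ * (U * A) = Aᵀ * A := by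
  rw [transpose_mul, Matrix.mul_assoc, ← Matrix.mul_assoc Uᵀ, hU, Matrix.one_mul]

section InvSqrt

variable {ι : Type*} [Fintype ι] [DecidableEq ι]

theorem diagonal_inv_sqrt_mul_diagonal_mul_diagonal_inv_sqrt {g : ι → ℝ} (hg : ∀ i, 0 < g i) :
    diagonal (fun i => (√(g i))⁻¹) * diagonal g * diagonal (fun i => (√(g i))⁻¹) = 1 := by
  rw [diagonal_mul_diagonal, diagonal_mul_diagonal, ← diagonal_one]
  congr 1
  funext i
  have hsqrt : 0 < √(g i) := Real.sqrt_pos.mpr (hg i)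
  field_simp
  exact (Real.sq_sqrt (hg i).le).symm

theorem diagonal_inv_sqrt_mul_diagonal_sq_mul_diagonal_inv_sqrt {g : ι → ℝ} (hg : ∀ i, 0 ≤ g i) :
    diagonal (fun i => (√(g i))⁻¹) * (diagonal g * diagonal g) * diagonal (fun i => (√(g i))⁻¹) =
      diagonal g := by
  simp only [diagonal_mul_diagonal]
  congr 1
  funext i
  rcases (hg i).eq_or_lt with hzero | hpos
  · simp [← hzero]
  · have hsqrt : 0 < √(g i) := Real.sqrt_pos.mpr hpos
    field_simp
    rw [Real.sq_sqrt hpos.le]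

end InvSqrt

end Matrix

theorem stmt11_general {n : ℕ}
    (Xi Xo Ri Ro U V Γ : Matrix (Fin n) (Fin n) ℝ)
    (g : Fin n → ℝ) (hg : ∀ i, 0 < g i) (hΓ : Γ = diagonal g)
    (hXi : Xi = Riᵀ * Ri) (hXo : Ro ᵀ * Ro = Xo)
    (hU : Uᵀ * U = 1) (hV : Vᵀ * V = 1)
    (hSVD : Ro * Riᵀ = U * Γ * Vᵀ) :
    let Γinvhalf : Matrix (Fin n) (Fin n) ℝ := diagonal fun i => (Real.sqrt (g i))⁻¹
    let T : Matrix (Fin n) (Fin n) ℝ := Γinvhalf * Uᵀ * Ro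
    let Tinv : Matrix (Fin n) (Fin n) ℝ := Riᵀ * V * Γinvhalf
    T * Tinv = 1 ∧ Tinv * T = 1 ∧
      T * Xi * Tᵀ = Γ ∧ Tinvᵀ * Xo * Tinv = Γ := by
  intro S T Tinv
  have hS : Sᵀ = S := diagonal_transpose _
  have hΓt : Γᵀ = Γ := hΓ ▸ diagonal_transpose g
  have hSΓS : S * Γ * S = 1 := hΓ ▸ diagonal_inv_sqrt_mul_diagonal_mul_diagonal_inv_sqrt hg
  have hSΓΓS : S * (Γ * Γ) * S = Γ :=
    hΓ ▸ diagonal_inv_sqrt_mul_diagonal_sq_mul_diagonal_inv_sqrt fun i => (hg i).le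
  have hTRi : T * Riᵀ = S * Γ * Vᵀ := by
    simp only [T, Matrix.mul_assoc, hSVD, ← Matrix.mul_assoc Uᵀ U, hU, Matrix.one_mul]
  have hRoTinv : Ro * Tinv = U * (Γ * S) := by
    simp only [Tinv, ← Matrix.mul_assoc, hSVD]
    simp only [Matrix.mul_assoc, hV, Matrix.one_mul]
  have hTTinv : T * Tinv = 1 := by
    calc T * Tinv = T * Riᵀ * V * S := by simp only [Tinv, Matrix.mul_assoc]
      _ = S * Γ * S := by rw [hTRi, Matrix.mul_assoc _ Vᵀ, hV, Matrix.mul_one]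
      _ = 1 := hSΓS
  refine ⟨hTTinv, mul_eq_one_comm.mp hTTinv, ?_, ?_⟩
  · calc T * Xi * Tᵀ = T * Riᵀ * (T * Riᵀ)ᵀ := by
          rw [hXi, transpose_mul T Riᵀ, transpose_transpose]; simp only [Matrix.mul_assoc]
      _ = S * (Γ * Γ) * S := by
          rw [hTRi, mul_mul_transpose_of_transpose_mul_self_eq_one hV, transpose_mul, hS, hΓt]
          simp only [Matrix.mul_assoc]
      _ = Γ := hSΓΓS
  · calc Tinvᵀ * Xo * Tinv = (Ro * Tinv)ᵀ * (Ro * Tinv) := by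
          rw [← hXo, transpose_mul Ro Tinv]; simp only [Matrix.mul_assoc]
      _ = S * (Γ * Γ) * S := by
          rw [hRoTinv, transpose_mul_mul_of_transpose_mul_self_eq_one hU, transpose_mul, hS, hΓt]
          simp only [Matrix.mul_assoc]
      _ = Γ := hSΓΓS

/-- the balancing transformation `T = Γ^{-1/2} Uᵀ R_o` is invertible
with inverse `R_iᵀ V Γ^{-1/2}`, and it balances the two Gramians:
`T X_i Tᵀ = Γ` and `T⁻ᵀ X_o T⁻¹ = Γ`. -/
theorem stmt11 {n : ℕ}
    (Xi Xo Ri Ro U V Γ : Matrix (Fin n) (Fin n) ℝ)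
    (g : Fin n → ℝ) (hg : ∀ i, 0 < g i) (hΓ : Γ = diagonal g)
    (hXi : Xi = Riᵀ * Ri) (hXo : Ro ᵀ * Ro = Xo)
    (hRi : IsUnit Ri) (hRo : IsUnit Ro)
    (hU : Uᵀ * U = 1) (hV : Vᵀ * V = 1)
    (hSVD : Ro * Riᵀ = U * Γ * Vᵀ) :
    let Γinvhalf : Matrix (Fin n) (Fin n) ℝ := diagonal fun i => (Real.sqrt (g i))⁻¹
    let T : Matrix (Fin n) (Fin n) ℝ := Γinvhalf * Uᵀ * Ro
    let Tinv : Matrix (Fin n) (Fin n) ℝ := Riᵀ * V * Γinvhalf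
    T * Tinv = 1 ∧ Tinv * T = 1 ∧
      T * Xi * Tᵀ = Γ ∧ Tinvᵀ * Xo * Tinv = Γ :=
  stmt11_general Xi Xo Ri Ro U V Γ g hg hΓ hXi hXo hU hV hSVD
end
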